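/- If T is a subcubic tree of order n with independence number exactly (2n+1)/3, then T has a unique maximum independent set. -/

import Mathlib

open SimpleGraph

/-- A set of vertices is independent if its vertices are pairwise non-adjacent. -/
def SimpleGraph.IsIndepSet' {V : Type*} (G : SimpleGraph V) (s : Set V) : Prop :=
  s.Pairwise (fun u v => ¬ G.Adj u v)

/-- The independence number of a graph. -/
noncomputable def indepNum {V : Type*} (G : SimpleGraph V) : ℕ :=
  sSup {k | ∃ s : Finset V, G.IsIndepSet' ↑s ∧ s.card = k}

/-- The number of maximum independent sets of a graph. -/
noncomputable def numMaxIndep {V : Type*} (G : SimpleGraph V) : ℕ :=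
  {s : Finset V | G.IsIndepSet' ↑s ∧ s.card = _root_.indepNum G}.ncard

/-! If `S` is an independent set with `3|S| = 2n + 1`, its complement `C` meets every edge and
`3|C| = n - 1`. Since the tree has `n - 1` edges and all degrees are at most 3, the count
`n - 1 ≤ ∑_{v ∈ C} deg v ≤ 3|C| = n - 1` is tight, so no edge has both ends in `C`: every
maximum independent set is a colour class of a proper 2-colouring of the tree. A connected graph
has only one such colouring up to swapping the colours, and the two classes have different
sizes. -/

namespace SimpleGraph

variable {V : Type*} {G : SimpleGraph V}

open Finset

lemma exists_isIndepSet'_card_eq_indepNum [Fintype V] (G : SimpleGraph V) :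
    ∃ s : Finset V, G.IsIndepSet' ↑s ∧ s.card = _root_.indepNum G :=
  Nat.sSup_mem (s := {k | ∃ s : Finset V, G.IsIndepSet' ↑s ∧ s.card = k})
    ⟨0, ∅, by simp [IsIndepSet'], rfl⟩
    ⟨Fintype.card V, by rintro k ⟨s, -, rfl⟩; exact s.card_le_univ⟩

lemma sum_degree_eq_card_dart_fst_mem [Fintype V] [DecidableRel G.Adj] [DecidableEq V]
    (C : Finset V) : ∑ v ∈ C, G.degree v = #{d : G.Dart | d.fst ∈ C} := by
  rw [card_eq_sum_card_fiberwise (f := fun d : G.Dart => d.fst) (t := C)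
    fun d hd => by simpa using hd]
  refine sum_congr rfl fun v hv => ?_
  rw [← dart_fst_fiber_card_eq_degree]
  congr 1
  ext d
  simp only [mem_filter, mem_univ, true_and]
  exact ⟨fun h => ⟨h ▸ hv, h⟩, And.right⟩

theorem IsVertexCover.isIndepSet_of_sum_degree_le [Fintype V] [DecidableRel G.Adj]
    {C : Finset V} (hC : G.IsVertexCover ↑C) (h : ∑ v ∈ C, G.degree v ≤ #G.edgeFinset) :
    G.IsIndepSet ↑C := by
  classical
  have hinj : Set.InjOn Dart.edge (({d : G.Dart | d.fst ∈ C} : Finset _) : Set G.Dart) := by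
    refine injOn_of_surjOn_of_card_le (t := G.edgeFinset) _ (fun d _ => by simp) ?_
      (by rwa [← sum_degree_eq_card_dart_fst_mem])
    intro e he
    induction e using Sym2.ind with
    | _ u v =>
      have huv : G.Adj u v := by simpa using he
      rcases hC huv with hu | hv
      · exact ⟨⟨(u, v), huv⟩, by simpa using hu, rfl⟩
      · exact ⟨⟨(v, u), huv.symm⟩, by simpa using hv, Sym2.eq_swap⟩
  intro u hu v hv _ huv
  let d : G.Dart := ⟨(u, v), huv⟩
  exact d.symm_ne (hinj (by simpa [d] using hv) (by simpa [d] using hu) d.edge_symm)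

lemma mem_iff_notMem_of_adj {s : Set V} (hs : G.IsIndepSet s) (hs' : G.IsVertexCover s)
    {u v : V} (h : G.Adj u v) : u ∈ s ↔ v ∉ s :=
  ⟨fun hu hv => hs hu hv h.ne h, fun hv => (hs' h).resolve_right hv⟩

theorem Preconnected.eq_or_eq_compl_of_isIndepSet_of_isVertexCover (hG : G.Preconnected)
    {s t : Set V} (hs : G.IsIndepSet s) (hs' : G.IsVertexCover s)
    (ht : G.IsIndepSet t) (ht' : G.IsVertexCover t) : t = s ∨ t = sᶜ := by
  have agree_iff : ∀ u v, (u ∈ s ↔ u ∈ t) ↔ (v ∈ s ↔ v ∈ t) := by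
    intro u v
    obtain ⟨p⟩ := hG u v
    induction p with
    | nil => rfl
    | cons h _ ih =>
      rw [← ih, mem_iff_notMem_of_adj hs hs' h, mem_iff_notMem_of_adj ht ht' h]
      tauto
  by_cases h : ∃ u, (u ∈ s ↔ u ∈ t)
  · obtain ⟨u, hu⟩ := h
    exact .inl <| Set.ext fun v => ((agree_iff u v).1 hu).symm
  · refine .inr <| Set.ext fun v => ?_
    have := fun hv => h ⟨v, hv⟩
    rw [Set.mem_compl_iff]
    tauto

theorem IsTree.isVertexCover_of_isIndepSet [Fintype V] [DecidableRel G.Adj] (hG : G.IsTree)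
    (hdeg : ∀ v, G.degree v ≤ 3) {S : Finset V} (hS : G.IsIndepSet ↑S)
    (hcard : 3 * #S = 2 * Fintype.card V + 1) : G.IsVertexCover ↑S := by
  classical
  have hsum : ∑ v ∈ Sᶜ, G.degree v ≤ #G.edgeFinset :=
    calc ∑ v ∈ Sᶜ, G.degree v
      _ ≤ #Sᶜ * 3 := by simpa using sum_le_card_nsmul _ _ 3 fun v _ => hdeg v
      _ = #G.edgeFinset := by
        have := hG.card_edgeFinset
        rw [card_compl]
        omega
  rw [← isIndepSet_compl_iff_isVertexCover, ← coe_compl]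
  exact IsVertexCover.isIndepSet_of_sum_degree_le (by rwa [coe_compl, isVertexCover_compl]) hsum

end SimpleGraph

theorem stmt13 {V : Type*} [Fintype V] (T : SimpleGraph V) (hT : T.IsTree)
    (hsub : ∀ v : V, (T.neighborSet v).ncard ≤ 3) (n : ℕ)
    (hn : Fintype.card V = n) (h : 3 * _root_.indepNum T = 2 * n + 1) :
    ∃! s : Finset V, T.IsIndepSet' ↑s ∧ s.card = _root_.indepNum T := by
  classical
  have hdeg : ∀ v, T.degree v ≤ 3 := fun v => by
    simpa [Set.ncard_eq_toFinset_card', ← neighborFinset_def] using hsub v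
  have hcover : ∀ s : Finset V, T.IsIndepSet' ↑s → s.card = _root_.indepNum T →
      T.IsVertexCover ↑s := fun s hs hk => hT.isVertexCover_of_isIndepSet hdeg hs (by omega)
  obtain ⟨S, hS, hSk⟩ := exists_isIndepSet'_card_eq_indepNum T
  refine ⟨S, ⟨hS, hSk⟩, fun S' ⟨hS', hS'k⟩ => ?_⟩
  rcases hT.connected.preconnected.eq_or_eq_compl_of_isIndepSet_of_isVertexCover
    hS (hcover S hS hSk) hS' (hcover S' hS' hS'k) with hS'S | hS'S
  · exact_mod_cast hS'S
  · rw [← Finset.coe_compl, Finset.coe_inj] at hS'S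
    have := Finset.card_compl S
    subst hS'S
    omega
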